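/- Let H be a connected hypergraph in which every vertex has degree at most 2 and which has at least one edge. Then the power domination number of H equals 1. -/
import Mathlib


open Set

/-- `b` shares an edge with `a`. -/
def Nbr {V : Type*} (E : Set (Set V)) (a b : V) : Prop := ∃ e ∈ E, a ∈ e ∧ b ∈ e

/-- Closed neighborhood of `a`: `a` together with all its neighbors. -/
def ClosedNbhd {V : Type*} (E : Set (Set V)) (a : V) : Set V := {b | b = a ∨ Nbr E a b}

/-- Connectivity: any two vertices are joined by a path. -/
def Conn {V : Type*} (E : Set (Set V)) : Prop := ∀ a b : V, Relation.ReflTransGen (Nbr E) a b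

/-- One infection step: a nonempty set `A` of infected vertices infects an edge `e`
if `A ⊆ e` and every uninfected `w` with `A ∪ {w}` inside some edge lies in `e`. -/
def InfStep {V : Type*} (E : Set (Set V)) (S T : Set V) : Prop :=
  ∃ A e, A.Nonempty ∧ A ⊆ S ∧ e ∈ E ∧ A ⊆ e ∧
    (∀ w ∉ S, (∃ f ∈ E, insert w A ⊆ f) → w ∈ e) ∧ T = S ∪ e

/-- One observation step of 1-power domination: an observed vertex `v` observes an incident
edge `e` containing all its unobserved neighbors. -/
def ObsStep {V : Type*} (E : Set (Set V)) (S T : Set V) : Prop :=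
  ∃ v ∈ S, ∃ e ∈ E, v ∈ e ∧ (∀ w ∉ S, Nbr E v w → w ∈ e) ∧ T = S ∪ e

/-- Domination step: the set observed after the initial domination step. -/
def DomClosure {V : Type*} (E : Set (Set V)) (S₀ : Set V) : Set V := ⋃ v ∈ S₀, ClosedNbhd E v

/-- `S₀` is an infectious power dominating set. -/
def IsIPDS {V : Type*} (E : Set (Set V)) (S₀ : Set V) : Prop :=
  Relation.ReflTransGen (InfStep E) (DomClosure E S₀) Set.univ

/-- `S₀` is a (1-)power dominating set. -/
def IsPDS {V : Type*} (E : Set (Set V)) (S₀ : Set V) : Prop :=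
  Relation.ReflTransGen (ObsStep E) (DomClosure E S₀) Set.univ

/-- `S₀` is an infection set (no domination step). -/
def IsInfectionSet {V : Type*} (E : Set (Set V)) (S₀ : Set V) : Prop :=
  Relation.ReflTransGen (InfStep E) S₀ Set.univ

/-- `D` is a dominating set. -/
def IsDomSet {V : Type*} (E : Set (Set V)) (D : Set V) : Prop :=
  ∀ v : V, ∃ d ∈ D, v ∈ ClosedNbhd E d

/-- The infectious power domination number `γ_PI`. -/
noncomputable def gammaPI {V : Type*} (E : Set (Set V)) : ℕ :=
  sInf {n | ∃ S₀ : Set V, S₀.ncard = n ∧ IsIPDS E S₀}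

/-- The power domination number `γ_P`. -/
noncomputable def gammaP {V : Type*} (E : Set (Set V)) : ℕ :=
  sInf {n | ∃ S₀ : Set V, S₀.ncard = n ∧ IsPDS E S₀}

/-- The infection number `I`. -/
noncomputable def infectionNumber {V : Type*} (E : Set (Set V)) : ℕ :=
  sInf {n | ∃ S₀ : Set V, S₀.ncard = n ∧ IsInfectionSet E S₀}

/-- The domination number `γ`. -/
noncomputable def gammaDom {V : Type*} (E : Set (Set V)) : ℕ :=
  sInf {n | ∃ D : Set V, D.ncard = n ∧ IsDomSet E D}

/-- Degree of a vertex: number of edges containing it. -/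
noncomputable def degree {V : Type*} (E : Set (Set V)) (v : V) : ℕ := {e ∈ E | v ∈ e}.ncard

section aux

variable {V : Type*}

/-- Invariant: every observed vertex is in at most one edge not fully observed. -/
def Qinv (E : Set (Set V)) (S : Set V) : Prop :=
  ∀ u ∈ S, ∀ e ∈ E, ∀ f ∈ E, u ∈ e → u ∈ f → ¬ e ⊆ S → ¬ f ⊆ S → e = f

lemma deg2_imp [Fintype V] {E : Set (Set V)} (hdeg : ∀ v : V, degree E v ≤ 2)
    {u : V} {e f g : Set V} (he : e ∈ E) (hf : f ∈ E) (hg : g ∈ E)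
    (hue : u ∈ e) (huf : u ∈ f) (hug : u ∈ g) (hef : e ≠ f) (heg : e ≠ g) (hfg : f ≠ g) :
    False := by
  have hsub : ({e, f, g} : Set (Set V)) ⊆ {x ∈ E | u ∈ x} := by
    intro x hx
    simp only [Set.mem_insert_iff, Set.mem_singleton_iff] at hx
    rcases hx with rfl | rfl | rfl <;> exact ⟨‹_›, ‹_›⟩
  have h3 : ({e, f, g} : Set (Set V)).ncard = 3 := by
    rw [Set.ncard_insert_of_notMem (by simp [hef, heg]) (Set.toFinite _),
        Set.ncard_insert_of_notMem (by simp [hfg]) (Set.toFinite _),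
        Set.ncard_singleton]
  have h4 := Set.ncard_le_ncard hsub (Set.toFinite _)
  have h5 := hdeg u
  unfold degree at h5
  omega

lemma cross {R : V → V → Prop} {S : Set V} {a b : V} (h : Relation.ReflTransGen R a b)
    (ha : a ∈ S) (hb : b ∉ S) : ∃ u ∈ S, ∃ w, w ∉ S ∧ R u w := by
  induction h with
  | refl => exact absurd ha hb
  | tail h' r ih =>
    rename_i c d
    by_cases hc : c ∈ S
    · exact ⟨c, hc, d, hb, r⟩
    · exact ih hc

lemma step_exists [Fintype V] {E : Set (Set V)} (hdeg : ∀ v : V, degree E v ≤ 2)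
    (hconn : Conn E) {S : Set V} (hQ : Qinv E S) (hne : S.Nonempty) (hS : S ≠ Set.univ) :
    ∃ T, ObsStep E S T ∧ Qinv E T ∧ S ⊆ T ∧
      (Set.univ \ T).ncard < (Set.univ \ S).ncard := by
  obtain ⟨v₀, hv₀⟩ := hne
  obtain ⟨x, hx⟩ : ∃ x, x ∉ S := by
    by_contra h
    push_neg at h
    exact hS (Set.eq_univ_of_forall h)
  obtain ⟨u, hu, w, hw, e, heE, hue, hwe⟩ := cross (hconn v₀ x) hv₀ hx
  have heS : ¬ e ⊆ S := fun h => hw (h hwe)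
  refine ⟨S ∪ e, ⟨u, hu, e, heE, hue, ?_, rfl⟩, ?_, Set.subset_union_left, ?_⟩
  · -- all unobserved neighbors of u lie in e
    rintro w' hw' ⟨f, hfE, huf, hwf⟩
    have hfS : ¬ f ⊆ S := fun h => hw' (h hwf)
    have := hQ u hu f hfE e heE huf hue hfS heS
    exact this ▸ hwf
  · -- invariant preserved
    intro u' hu' a haE b hbE hua hub haT hbT
    have haS : ¬ a ⊆ S := fun h => haT (h.trans Set.subset_union_left)
    have hbS : ¬ b ⊆ S := fun h => hbT (h.trans Set.subset_union_left)
    rcases hu' with hu' | hu'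
    · exact hQ u' hu' a haE b hbE hua hub haS hbS
    · have hae : a ≠ e := fun h => haT (h ▸ Set.subset_union_right)
      have hbe : b ≠ e := fun h => hbT (h ▸ Set.subset_union_right)
      by_contra hab
      exact deg2_imp hdeg haE hbE heE hua hub hu' hab hae hbe
  · -- cardinality decreases
    apply Set.ncard_lt_ncard _ (Set.toFinite _)
    constructor
    · exact Set.diff_subset_diff_right Set.subset_union_left
    · intro hsub
      have : w ∈ Set.univ \ (S ∪ e) := hsub ⟨trivial, hw⟩
      exact this.2 (Or.inr hwe)

lemma reach_univ [Fintype V] {E : Set (Set V)} (hdeg : ∀ v : V, degree E v ≤ 2)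
    (hconn : Conn E) :
    ∀ n : ℕ, ∀ S : Set V, (Set.univ \ S).ncard ≤ n → Qinv E S → S.Nonempty →
      Relation.ReflTransGen (ObsStep E) S Set.univ := by
  intro n
  induction n with
  | zero =>
    intro S hc hQ hne
    have : Set.univ \ S = ∅ := by
      rw [← Set.ncard_eq_zero (Set.toFinite _)]
      omega
    have hS : S = Set.univ :=
      Set.eq_univ_of_univ_subset (Set.diff_eq_empty.mp this)
    rw [hS]
  | succ n ih =>
    intro S hc hQ hne
    by_cases hS : S = Set.univ
    · rw [hS]
    · obtain ⟨T, hstep, hQT, hsub, hlt⟩ := step_exists hdeg hconn hQ hne hS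
      exact Relation.ReflTransGen.head hstep
        (ih T (by omega) hQT (hne.mono hsub))

lemma base_Q [Fintype V] {E : Set (Set V)} (hdeg : ∀ v : V, degree E v ≤ 2) (v : V) :
    Qinv E (DomClosure E {v}) := by
  set S := DomClosure E {v} with hSdef
  have hedge : ∀ g ∈ E, v ∈ g → g ⊆ S := by
    intro g hg hvg w hwg
    refine Set.mem_biUnion (Set.mem_singleton v) (Or.inr ⟨g, hg, hvg, hwg⟩)
  intro u hu e heE f hfE hue huf heS hfS
  simp only [hSdef, DomClosure, Set.mem_iUnion, Set.mem_singleton_iff] at hu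
  obtain ⟨v', rfl, hu⟩ := hu
  rcases hu with rfl | ⟨g, hgE, hvg, hug⟩
  · exact absurd (hedge e heE hue) heS
  · have hge : e ≠ g := fun h => heS (h ▸ hedge g hgE hvg)
    have hgf : f ≠ g := fun h => hfS (h ▸ hedge g hgE hvg)
    by_contra hef
    exact deg2_imp hdeg heE hfE hgE hue huf hug hef hge hgf

end aux

theorem stmt8 {V : Type*} [Fintype V] [Nonempty V] (E : Set (Set V))
    (hred : ∀ e ∈ E, ∀ f ∈ E, e ⊆ f → e = f)
    (hconn : Conn E) (hE : E.Nonempty) (hdeg : ∀ v : V, degree E v ≤ 2) :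
    gammaP E = 1 := by
  obtain ⟨v⟩ := ‹Nonempty V›
  have hvS : v ∈ DomClosure E {v} :=
    Set.mem_biUnion (Set.mem_singleton v) (Or.inl rfl)
  have h1 : IsPDS E {v} :=
    reach_univ hdeg hconn _ (DomClosure E {v}) le_rfl (base_Q hdeg v) ⟨v, hvS⟩
  have hmem : 1 ∈ {n | ∃ S₀ : Set V, S₀.ncard = n ∧ IsPDS E S₀} :=
    ⟨{v}, Set.ncard_singleton v, h1⟩
  have h0 : 0 ∉ {n | ∃ S₀ : Set V, S₀.ncard = n ∧ IsPDS E S₀} := by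
    rintro ⟨S₀, hcard, hPDS⟩
    have hS₀ : S₀ = ∅ := (Set.ncard_eq_zero (Set.toFinite _)).mp hcard
    have hdom : DomClosure E (∅ : Set V) = ∅ := by
      simp [DomClosure]
    unfold IsPDS at hPDS
    rw [hS₀, hdom] at hPDS
    rcases (Relation.ReflTransGen.cases_head hPDS) with h | ⟨c, hc, _⟩
    · exact Set.univ_nonempty.ne_empty h.symm
    · obtain ⟨w, hw, _⟩ := hc
      exact hw
  have hle : gammaP E ≤ 1 := Nat.sInf_le hmem
  have hmemInf := Nat.sInf_mem ⟨1, hmem⟩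
  unfold gammaP at hle ⊢
  interval_cases h : sInf {n | ∃ S₀ : Set V, S₀.ncard = n ∧ IsPDS E S₀}
  · exact absurd (h ▸ hmemInf) h0
  · rfl
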